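/- Let n, m ≥ 1 and λ ∈ (0, 1). Set A := V⁻¹([0, λ]) = {p : V(p) ≤ λ} and N₀ := V⁻¹({0}), both with the subspace topology. Then N₀ is a strong deformation retract of A: there exists a continuous map H : [0, 1] × A → A such that H(0, a) = a for all a ∈ A, V(H(1, a)) = 0 for all a ∈ A, and H(t, a) = a for all t ∈ [0, 1] and all a ∈ A with V(a) = 0. -/

import Mathlib

/-!
Write `‖x‖` for the sup norm on `𝕋ⁿ`, the largest `|xⱼ|` with `xⱼ` represented in `(-π, π]`.
Since `V ≤ λ < 1` forces `x ≠ 0`, we may push `x` radially inside the cube `[-π, π]ⁿ`,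
scaling it by `(‖x‖ + t (π - ‖x‖)) / ‖x‖`, while shrinking `z` linearly to `0`. The scaling
moves every coordinate away from `0`, so each `cos xⱼ`, and hence `V`, decreases; at `t = 1` a
coordinate of maximal modulus reaches `±π`, so `V = 0`; and a point of `N₀` already has a
coordinate at `π`, hence `‖x‖ = π` and it does not move. Continuity is in doubt only where a
coordinate sits at `π`, where the representative in `(-π, π]` jumps; but then `‖x‖ = π`, so
the displacement tends to `0` nearby.
-/

open Real

namespace Real.Angle

theorem norm_eq_abs_toReal (θ : Angle) : ‖θ‖ = |θ.toReal| := by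
  conv_lhs => rw [← θ.coe_toReal]
  refine (AddCircle.norm_coe_eq_abs_iff (2 * π) two_pi_pos.ne').2 ?_
  rw [abs_of_pos two_pi_pos]
  linarith [θ.abs_toReal_le_pi]

theorem norm_le_pi (θ : Angle) : ‖θ‖ ≤ π :=
  θ.norm_eq_abs_toReal ▸ θ.abs_toReal_le_pi

theorem norm_pi : ‖(π : Angle)‖ = π := by
  rw [norm_eq_abs_toReal, toReal_pi, abs_of_pos pi_pos]

theorem norm_coe_le_abs (r : ℝ) : ‖(r : Angle)‖ ≤ |r| :=
  QuotientAddGroup.norm_mk_le_norm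

theorem eq_pi_of_cos_eq_neg_one {θ : Angle} (h : cos θ = -1) : θ = π := by
  rw [← Real.cos_pi, ← cos_coe, cos_eq_iff_eq_or_eq_neg, neg_coe_pi, or_self] at h
  exact h

theorem continuousAt_toReal {θ : Angle} (h : θ ≠ π) : ContinuousAt toReal θ := by
  have hθ : θ ≠ ((-π : ℝ) : Angle) := by rwa [coe_neg, neg_coe_pi]
  have : Fact (0 < 2 * π) := ⟨two_pi_pos⟩
  exact continuous_subtype_val.continuousAt.comp
    (AddCircle.continuousAt_equivIoc (2 * π) (-π) hθ)

theorem one_add_cos_div_two_nonneg (θ : Angle) : 0 ≤ (1 + cos θ) / 2 := by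
  linarith [cos_toReal θ ▸ Real.neg_one_le_cos θ.toReal]

theorem continuousAt_add_coe_mul_toReal {X : Type*} [TopologicalSpace X] {θ : X → Angle}
    {φ : X → ℝ} {x : X} (hθ : ContinuousAt θ x) (hφ : ContinuousAt φ x)
    (h : θ x ≠ π ∨ φ x = 0) :
    ContinuousAt (fun q => θ q + ((φ q * (θ q).toReal : ℝ) : Angle)) x := by
  rcases h with hπ | hφ0
  · exact hθ.add (continuous_coe.continuousAt.comp (hφ.mul ((continuousAt_toReal hπ).comp hθ)))
  · have hbound : ∀ q, ‖((φ q * (θ q).toReal : ℝ) : Angle)‖ ≤ |φ q| * π := fun q =>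
      calc ‖((φ q * (θ q).toReal : ℝ) : Angle)‖ ≤ |φ q * (θ q).toReal| := norm_coe_le_abs _
        _ ≤ |φ q| * π := by rw [abs_mul]; gcongr; exact abs_toReal_le_pi _
    have hlim : Filter.Tendsto (fun q => |φ q| * π) (nhds x) (nhds 0) := by
      simpa [hφ0] using (hφ.abs.mul_const π).tendsto
    simpa [ContinuousAt, hφ0] using hθ.tendsto.add (squeeze_zero_norm hbound hlim)

end Real.Angle

open Real.Angle

namespace TorusPotential

variable {ι : Type*} [Fintype ι]

theorem pi_norm_le_pi (x : ι → Angle) : ‖x‖ ≤ π :=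
  (pi_norm_le_iff_of_nonneg pi_pos.le).2 fun j => norm_le_pi (x j)

noncomputable def stretchFactor (t : ℝ) (x : ι → Angle) : ℝ :=
  t * (π - ‖x‖) / ‖x‖

noncomputable def stretch (t : ℝ) (x : ι → Angle) : ι → Angle :=
  fun j => x j + ((stretchFactor t x * (x j).toReal : ℝ) : Angle)

theorem stretch_zero (x : ι → Angle) : stretch 0 x = x := by
  funext j
  simp [stretch, stretchFactor]

theorem stretch_of_norm_eq_pi {x : ι → Angle} (hx : ‖x‖ = π) (t : ℝ) : stretch t x = x := by
  funext j
  simp [stretch, stretchFactor, hx]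

theorem cos_stretch (t : ℝ) (x : ι → Angle) (j : ι) :
    cos (stretch t x j) = Real.cos ((1 + stretchFactor t x) * (x j).toReal) := by
  rw [stretch, ← cos_coe, one_add_mul, coe_add, coe_toReal]

theorem one_add_stretchFactor {x : ι → Angle} (hx : 0 < ‖x‖) (t : ℝ) :
    1 + stretchFactor t x = (‖x‖ + t * (π - ‖x‖)) / ‖x‖ := by
  rw [stretchFactor]; field_simp

theorem cos_stretch_le {t : ℝ} (ht0 : 0 ≤ t) (ht1 : t ≤ 1) {x : ι → Angle} (hx : 0 < ‖x‖)
    (j : ι) : cos (stretch t x j) ≤ cos (x j) := by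
  have hxπ := pi_norm_le_pi x
  have hj : |(x j).toReal| ≤ ‖x‖ := norm_eq_abs_toReal (x j) ▸ norm_le_pi_norm x j
  have hs : 1 ≤ 1 + stretchFactor t x := by
    rw [one_add_stretchFactor hx, le_div_iff₀ hx]; nlinarith
  have hsπ : (1 + stretchFactor t x) * ‖x‖ ≤ π := by
    rw [one_add_stretchFactor hx, div_mul_cancel₀ _ hx.ne']; nlinarith
  rw [cos_stretch, ← cos_toReal, ← Real.cos_abs ((1 + _) * _), ← Real.cos_abs (x j).toReal,
    abs_mul, abs_of_pos (by linarith)]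
  refine Real.cos_le_cos_of_nonneg_of_le_pi (abs_nonneg _) ?_
    (le_mul_of_one_le_left (abs_nonneg _) hs)
  nlinarith [abs_nonneg (x j).toReal]

theorem exists_cos_stretch_one_eq_neg_one {x : ι → Angle} (hx : 0 < ‖x‖) :
    ∃ j, cos (stretch 1 x j) = -1 := by
  have : Nonempty ι := by
    by_contra h
    rw [not_nonempty_iff] at h
    simp [Subsingleton.elim x 0] at hx
  obtain ⟨⟨j, hj⟩, -⟩ := IsGreatest.pi_norm x
  refine ⟨j, ?_⟩
  replace hj : |(x j).toReal| = ‖x‖ := norm_eq_abs_toReal (x j) ▸ hj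
  rw [cos_stretch, one_add_stretchFactor hx, one_mul, add_sub_cancel]
  rcases abs_eq hx.le |>.1 hj with h | h
  · rw [h, div_mul_cancel₀ _ hx.ne', Real.cos_pi]
  · rw [h, mul_neg, div_mul_cancel₀ _ hx.ne', Real.cos_neg, Real.cos_pi]

theorem continuousAt_stretch {t : ℝ} {x : ι → Angle} (hx : 0 < ‖x‖) :
    ContinuousAt (fun q : ℝ × (ι → Angle) => stretch q.1 q.2) (t, x) := by
  have hc : ContinuousAt (fun q : ℝ × (ι → Angle) => stretchFactor q.1 q.2) (t, x) :=
    (continuousAt_fst.mul (continuousAt_const.sub continuousAt_snd.norm)).div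
      continuousAt_snd.norm hx.ne'
  refine continuousAt_pi.2 fun j => continuousAt_add_coe_mul_toReal
    ((continuous_apply j).continuousAt.comp continuousAt_snd) hc ?_
  refine or_iff_not_imp_left.2 fun hj => ?_
  have hxπ : ‖x‖ = π :=
    (pi_norm_le_pi x).antisymm (norm_pi ▸ (not_not.1 hj) ▸ norm_le_pi_norm x j)
  simp [stretchFactor, hxπ]

variable {E : Type*} [NormedAddCommGroup E]

noncomputable def potential (p : (ι → Angle) × E) : ℝ :=
  (∏ j, (1 + Real.Angle.cos (p.1 j)) / 2) + ‖p.2‖ ^ 2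

theorem potential_nonneg (p : (ι → Angle) × E) : 0 ≤ potential p :=
  add_nonneg (Finset.prod_nonneg fun _ _ => one_add_cos_div_two_nonneg _) (sq_nonneg _)

theorem norm_pos_of_potential_lt_one {p : (ι → Angle) × E} (hp : potential p < 1) :
    0 < ‖p.1‖ := by
  refine (norm_nonneg _).lt_of_ne fun h => hp.not_ge ?_
  simp [potential, (norm_eq_zero.1 h.symm)]

theorem norm_eq_pi_and_eq_zero_of_potential_eq_zero {p : (ι → Angle) × E}
    (hp : potential p = 0) :
    ‖p.1‖ = π ∧ p.2 = 0 := by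
  obtain ⟨hprod, hz⟩ := (add_eq_zero_iff_of_nonneg
    (Finset.prod_nonneg fun _ _ => one_add_cos_div_two_nonneg _) (sq_nonneg _)).1 hp
  obtain ⟨j, -, hj⟩ := Finset.prod_eq_zero_iff.1 hprod
  have hπ : p.1 j = π := eq_pi_of_cos_eq_neg_one (by linarith)
  exact ⟨(pi_norm_le_pi p.1).antisymm (norm_pi ▸ hπ ▸ norm_le_pi_norm p.1 j),
    by simpa using hz⟩

variable [NormedSpace ℝ E]

noncomputable def deform (t : ℝ) (p : (ι → Angle) × E) : (ι → Angle) × E :=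
  (stretch t p.1, (1 - t) • p.2)

theorem potential_deform_le {t : ℝ} (ht0 : 0 ≤ t) (ht1 : t ≤ 1) {p : (ι → Angle) × E}
    (hp : 0 < ‖p.1‖) : potential (deform t p) ≤ potential p := by
  refine add_le_add (Finset.prod_le_prod (fun j _ => one_add_cos_div_two_nonneg _)
    fun j _ => ?_) ?_
  · have := cos_stretch_le ht0 ht1 hp j
    simp only [deform]
    linarith
  · have : |1 - t| ≤ 1 := abs_le.2 ⟨by linarith, by linarith⟩
    simp only [deform, norm_smul, Real.norm_eq_abs]
    gcongr
    exact mul_le_of_le_one_left (norm_nonneg _) this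

theorem potential_deform_one {p : (ι → Angle) × E} (hp : 0 < ‖p.1‖) :
    potential (deform 1 p) = 0 := by
  obtain ⟨j, hj⟩ := exists_cos_stretch_one_eq_neg_one hp
  have hprod : ∏ k, (1 + cos ((deform 1 p).1 k)) / 2 = 0 :=
    Finset.prod_eq_zero (Finset.mem_univ j) (by simp [deform, hj])
  rw [potential, hprod]
  simp [deform]

theorem deform_zero (p : (ι → Angle) × E) : deform 0 p = p := by
  simp [deform, stretch_zero]

theorem deform_of_potential_eq_zero {p : (ι → Angle) × E} (hp : potential p = 0) (t : ℝ) :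
    deform t p = p := by
  obtain ⟨hπ, hz⟩ := norm_eq_pi_and_eq_zero_of_potential_eq_zero hp
  exact Prod.ext (stretch_of_norm_eq_pi hπ t) (by simp [deform, hz])

theorem continuousAt_deform {t : ℝ} {p : (ι → Angle) × E} (hp : 0 < ‖p.1‖) :
    ContinuousAt (fun q : ℝ × ((ι → Angle) × E) => deform q.1 q.2) (t, p) :=
  ((continuousAt_stretch (t := t) hp).comp (x := (t, p))
    (continuous_fst.prodMk continuous_snd.fst).continuousAt).prodMk
    ((continuousAt_const.sub continuousAt_fst).smul continuousAt_snd.snd)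

end TorusPotential

open TorusPotential

/-- Let `V(x, z) = ∏ⱼ (1 + cos xⱼ)/2 + ‖z‖²` on `𝕋ⁿ × ℝᵐ` with `𝕋 = ℝ/2πℤ`.
For `λ ∈ (0, 1)`, the zero set `N₀ = V⁻¹({0})` is a strong deformation retract of the
sublevel set `A = V⁻¹([0, λ])`. -/
theorem stmt_7 (n m : ℕ) (lam : ℝ) (hlam1 : lam < 1)
    (V : (Fin n → Real.Angle) × (EuclideanSpace ℝ (Fin m)) → ℝ)
    (hV : ∀ p, V p = (∏ j, (1 + Real.Angle.cos (p.1 j)) / 2) + ‖p.2‖ ^ 2) :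
    ∃ H : (Set.Icc (0 : ℝ) 1) × (V ⁻¹' Set.Icc 0 lam) → (V ⁻¹' Set.Icc 0 lam),
      Continuous H ∧
      (∀ a, H (⟨0, by norm_num⟩, a) = a) ∧
      (∀ a, V (H (⟨1, by norm_num⟩, a)).1 = 0) ∧
      (∀ t a, V a.1 = 0 → H (t, a) = a) := by
  obtain rfl : V = (potential : (Fin n → Angle) × EuclideanSpace ℝ (Fin m) → ℝ) := funext hV
  have hpos (a : (Fin n → Angle) × EuclideanSpace ℝ (Fin m)) (ha : potential a ≤ lam) :
      0 < ‖a.1‖ :=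
    norm_pos_of_potential_lt_one (ha.trans_lt hlam1)
  refine ⟨fun q => ⟨deform q.1 q.2.1, potential_nonneg _,
    (potential_deform_le q.1.2.1 q.1.2.2 (hpos _ q.2.2.2)).trans q.2.2.2⟩, ?_,
    fun a => Subtype.ext (deform_zero _), fun a => potential_deform_one (hpos _ a.2.2),
    fun t a ha => Subtype.ext (deform_of_potential_eq_zero ha _)⟩
  refine (continuous_iff_continuousAt.2 fun q => ?_).subtype_mk _
  exact (continuousAt_deform (t := q.1) (hpos _ q.2.2.2)).comp (x := q)
    (continuous_subtype_val.prodMap continuous_subtype_val).continuousAt
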